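/- arXiv:1905.00948 — 2 statements merged into one kernel-verified Lean document; each statement's English description precedes it below -/
import Mathlib

section
/- Let f be a monotone submodular function on a finite ground set V with f(∅) = 0, and let S* be a set of size at most k maximizing f among sets of size ≤ k, with OPT = f(S*). If S ⊆ V satisfies f({e} | S) < OPT/(2k) for every e ∈ S* \ S, then f(S) ≥ OPT/2. -/
open Finset

variable {α : Type*} [DecidableEq α]

/-- A set function is submodular if marginal gains diminish. -/
def Submodular (f : Finset α → ℝ) : Prop :=
  ∀ A B : Finset α, A ⊆ B → ∀ x ∉ B, f (insert x B) - f B ≤ f (insert x A) - f A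

/-- A set function is monotone if larger sets have larger value. -/
def MonotoneFn (f : Finset α → ℝ) : Prop :=
  ∀ A B : Finset α, A ⊆ B → f A ≤ f B

/-- A set function is non-negative. -/
def NonnegFn (f : Finset α → ℝ) : Prop :=
  ∀ A : Finset α, 0 ≤ f A

/-! Adding the elements of `T \ S` to `S` one at a time, submodularity bounds each step by the
marginal gain of that element over `S` itself; monotonicity then gives `f T ≤ f S + |T \ S| c`
when every such gain is at most `c`. For `T = S*` and `c = OPT / (2k)` this is `OPT ≤ f S + OPT / 2`. -/

theorem Submodular.apply_union_le_add_sum_marginal {f : Finset α → ℝ} (hsub : Submodular f)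
    (S T : Finset α) : f (S ∪ T) ≤ f S + ∑ e ∈ T \ S, (f (insert e S) - f S) := by
  induction T using Finset.induction_on with
  | empty => simp
  | @insert x T hxT ih =>
    by_cases hxS : x ∈ S
    · rwa [union_insert, insert_eq_of_mem (mem_union_left T hxS), insert_sdiff_of_mem T hxS]
    · have hx : x ∉ S ∪ T := by simp [hxS, hxT]
      rw [union_insert, insert_sdiff_of_notMem T hxS,
        sum_insert fun h => hxT (mem_sdiff.mp h).1]
      have := hsub S (S ∪ T) subset_union_left x hx
      linarith

theorem MonotoneFn.le_add_card_sdiff_mul {f : Finset α → ℝ} (hmono : MonotoneFn f)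
    (hsub : Submodular f) {S T : Finset α} {c : ℝ}
    (hgain : ∀ e ∈ T \ S, f (insert e S) - f S ≤ c) :
    f T ≤ f S + #(T \ S) * c :=
  calc f T ≤ f (S ∪ T) := hmono _ _ subset_union_right
    _ ≤ f S + ∑ e ∈ T \ S, (f (insert e S) - f S) := hsub.apply_union_le_add_sum_marginal S T
    _ ≤ f S + #(T \ S) * c := by
      grw [sum_le_card_nsmul _ _ c hgain, nsmul_eq_mul]

theorem small_marginal_gain_half_opt_general (f : Finset α → ℝ) (k : ℕ)
    (hmono : MonotoneFn f) (hsub : Submodular f) (hempty : f ∅ = 0)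
    (Sstar : Finset α) (hcard : Sstar.card ≤ k)
    (S : Finset α)
    (hgain : ∀ e ∈ Sstar \ S, f (insert e S) - f S < f Sstar / (2 * k)) :
    f S ≥ f Sstar / 2 := by
  have hopt_nonneg : 0 ≤ f Sstar := hempty ▸ hmono ∅ Sstar (empty_subset _)
  have hcard' : (#(Sstar \ S) : ℝ) ≤ k := by
    exact_mod_cast (card_le_card sdiff_subset).trans hcard
  have hhalf : (k : ℝ) * (f Sstar / (2 * k)) ≤ f Sstar / 2 := by
    rcases eq_or_ne (k : ℝ) 0 with hk0 | hk0
    · simp only [hk0, zero_mul]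
      positivity
    · exact (by field_simp : (k : ℝ) * (f Sstar / (2 * k)) = f Sstar / 2).le
  have hbound := hmono.le_add_card_sdiff_mul hsub fun e he => (hgain e he).le
  grw [hcard', hhalf] at hbound
  linarith

theorem small_marginal_gain_half_opt (f : Finset α → ℝ) (k : ℕ) (hk : 1 ≤ k)
    (hmono : MonotoneFn f) (hsub : Submodular f) (hempty : f ∅ = 0)
    (Sstar : Finset α) (hcard : Sstar.card ≤ k)
    (hopt : ∀ A : Finset α, A.card ≤ k → f A ≤ f Sstar)
    (S : Finset α)
    (hgain : ∀ e ∈ Sstar \ S, f (insert e S) - f S < f Sstar / (2 * k)) :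
    f S ≥ f Sstar / 2 :=
  small_marginal_gain_half_opt_general f k hmono hsub hempty Sstar hcard S hgain
end

section
/- Let f be a non-negative monotone submodular function with f(∅) = 0 on a finite ground set, S* a maximizer of f over sets of size at most k, OPT = f(S*), and τ* = OPT/(2k). Suppose S_τ is a set with |S_τ| < k such that every element e ∈ S* \ S_τ satisfies f({e} | S_τ) < τ*. Then OPT ≤ f(S_τ) + OPT/2, hence f(S_τ) ≥ OPT/2. -/
open Finset

variable {α : Type*} [DecidableEq α]

/-!
Adding the elements of `S* \ S_τ` one at a time, submodularity bounds each step's gain by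
its gain over `S_τ` alone, which is below `OPT / (2k)`; at most `k` elements are added, so
`f (S_τ ∪ S*) ≤ f S_τ + OPT / 2`, and monotonicity gives `OPT ≤ f (S_τ ∪ S*)`.
-/

theorem Submodular.sub_le_sum_sub_of_disjoint {f : Finset α → ℝ} (hsub : Submodular f)
    (S T : Finset α) (hST : Disjoint S T) :
    f (S ∪ T) - f S ≤ ∑ e ∈ T, (f (insert e S) - f S) := by
  induction T using Finset.induction_on with
  | empty => simp
  | @insert x T hxT ih =>
    rw [disjoint_insert_right] at hST
    obtain ⟨hxS, hST⟩ := hST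
    have hx : x ∉ S ∪ T := by simp [hxS, hxT]
    have hstep := hsub S (S ∪ T) subset_union_left x hx
    rw [union_insert, sum_insert hxT]
    linarith [ih hST]

theorem Submodular.sub_le_sum_sub {f : Finset α → ℝ} (hsub : Submodular f) (S T : Finset α) :
    f (S ∪ T) - f S ≤ ∑ e ∈ T \ S, (f (insert e S) - f S) := by
  simpa [union_sdiff_self_eq_union] using
    hsub.sub_le_sum_sub_of_disjoint S (T \ S) disjoint_sdiff

theorem Submodular.le_add_sum_sub {f : Finset α → ℝ} (hsub : Submodular f) (hmono : MonotoneFn f)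
    (S T : Finset α) : f T ≤ f S + ∑ e ∈ T \ S, (f (insert e S) - f S) := by
  have hT : f T ≤ f (S ∪ T) := hmono _ _ subset_union_right
  linarith [hsub.sub_le_sum_sub S T]

theorem natCast_mul_div_two_mul_le_half {n k : ℕ} {a : ℝ} (hnk : n ≤ k) (ha : 0 ≤ a) :
    n * (a / (2 * k)) ≤ a / 2 := by
  rcases Nat.eq_zero_or_pos k with rfl | hk
  · simpa [Nat.le_zero.mp hnk] using div_nonneg ha zero_le_two
  · have hkR : (0 : ℝ) < k := by exact_mod_cast hk
    have hnkR : (n : ℝ) ≤ k := by exact_mod_cast hnk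
    rw [mul_div_assoc', div_le_div_iff₀ (by positivity) two_pos]
    nlinarith

theorem partial_solution_half_opt_general (f : Finset α → ℝ) (k : ℕ)
    (hnn : NonnegFn f) (hmono : MonotoneFn f) (hsub : Submodular f)
    (Sstar : Finset α) (hcard : Sstar.card ≤ k)
    (Sτ : Finset α)
    (hgain : ∀ e ∈ Sstar \ Sτ, f (insert e Sτ) - f Sτ < f Sstar / (2 * k)) :
    f Sstar ≤ f Sτ + f Sstar / 2 ∧ f Sτ ≥ f Sstar / 2 := by
  have hle := hsub.le_add_sum_sub hmono Sτ Sstar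
  have hsum : ∑ e ∈ Sstar \ Sτ, (f (insert e Sτ) - f Sτ)
      ≤ (Sstar \ Sτ).card * (f Sstar / (2 * k)) := by
    rw [← nsmul_eq_mul]
    exact sum_le_card_nsmul _ _ _ fun e he => (hgain e he).le
  have hcard' : (Sstar \ Sτ).card ≤ k := (card_le_card sdiff_subset).trans hcard
  have hhalf := natCast_mul_div_two_mul_le_half hcard' (hnn Sstar)
  exact ⟨by linarith, by linarith⟩

theorem partial_solution_half_opt (f : Finset α → ℝ) (k : ℕ)
    (hnn : NonnegFn f) (hmono : MonotoneFn f) (hsub : Submodular f)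
    (hempty : f ∅ = 0)
    (Sstar : Finset α) (hcard : Sstar.card ≤ k)
    (hopt : ∀ A : Finset α, A.card ≤ k → f A ≤ f Sstar)
    (Sτ : Finset α) (hSτ : Sτ.card < k)
    (hgain : ∀ e ∈ Sstar \ Sτ, f (insert e Sτ) - f Sτ < f Sstar / (2 * k)) :
    f Sstar ≤ f Sτ + f Sstar / 2 ∧ f Sτ ≥ f Sstar / 2 :=
  partial_solution_half_opt_general f k hnn hmono hsub Sstar hcard Sτ hgain
end
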